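/- arXiv:1810.11312 — 2 statements merged into one kernel-verified Lean document; each statement's English description precedes it below -/
import Mathlib

section
/- Let B_1, B_2, B_3, B_4 be (N_e/2)×(N_a/2) matrices with entries in {1, −1} such that {B_1, B_2} and {B_3, B_4} are 2D complementary pairs, i.e., R_{B_1}(m,n) + R_{B_2}(m,n) = 0 and R_{B_3}(m,n) + R_{B_4}(m,n) = 0 for all (m,n) ≠ (0,0), and the two pairs are mutually orthogonal complementary, i.e., R_{B_1,B_3}(m,n) + R_{B_2,B_4}(m,n) = 0 for all (m,n). Set M = N_a·N_e, and let (p_n, q_n) for n = 1,2,3,4 be the four positions (0,0), (1,0), (0,1), (1,1) in {0,1}×{0,1}, with U_n the 2×2 matrix having a 1 at (p_n,q_n) and 0 elsewhere. Let x_1,...,x_4 be complex numbers each of modulus 1/2, let X_Q be the TBH code matrix of x_1,...,x_4, and for each time slot t = 1,...,4 define the N_e×N_a antenna-array signal A_t = √(4/M)·Σ_{n=1}^{4} (X_Q)_{n,t}·(B_n ⊗ U_n) and the angle-domain signal G_t(ω,υ) = Σ_{p,q} A_t(p,q)·e^{-i(pω + qυ)}. Then for all reals ω, υ, Σ_{t=1}^{4}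 |G_t(ω,υ)|² = 4. -/
open Matrix

/-- 2D aperiodic crosscorrelation of two `L₁ × L₂` complex matrices (regarded as
functions on `ℤ × ℤ` vanishing outside `{0,...,L₁-1} × {0,...,L₂-1}`). -/
noncomputable def acf2 (L₁ L₂ : ℕ) (B D : ℤ → ℤ → ℂ) (m n : ℤ) : ℂ :=
  ∑ p ∈ Finset.range L₁, ∑ q ∈ Finset.range L₂,
    B p q * (starRingEnd ℂ) (D ((p : ℤ) + m) ((q : ℤ) + n))

/-- 2D Fourier transform of an `L₁ × L₂` complex matrix. -/
noncomputable def ft2 (L₁ L₂ : ℕ) (B : ℤ → ℤ → ℂ) (ω υ : ℝ) : ℂ :=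
  ∑ p ∈ Finset.range L₁, ∑ q ∈ Finset.range L₂,
    B p q * Complex.exp (-Complex.I * ((p : ℂ) * (ω : ℂ) + (q : ℂ) * (υ : ℂ)))

/-- Kronecker product `B ⊗ U_{p₀,q₀}`: the `2L₁ × 2L₂` matrix with entry
`B(a,b)` at position `(2a + p₀, 2b + q₀)` and zero elsewhere. -/
noncomputable def kron2 (L₁ L₂ : ℕ) (B : ℤ → ℤ → ℂ) (p₀ q₀ : ℤ) : ℤ → ℤ → ℂ :=
  fun p q =>
    if (p - p₀) % 2 = 0 ∧ 0 ≤ (p - p₀) / 2 ∧ (p - p₀) / 2 < (L₁ : ℤ) ∧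
       (q - q₀) % 2 = 0 ∧ 0 ≤ (q - q₀) / 2 ∧ (q - q₀) / 2 < (L₂ : ℤ)
    then B ((p - p₀) / 2) ((q - q₀) / 2) else 0

/-- The TBH quasi-orthogonal space-time block code matrix `X_Q`. -/
noncomputable def XQ (x₁ x₂ x₃ x₄ : ℂ) : Matrix (Fin 4) (Fin 4) ℂ :=
  !![x₁, starRingEnd ℂ x₂, x₃, starRingEnd ℂ x₄;
     x₂, -starRingEnd ℂ x₁, x₄, -starRingEnd ℂ x₃;
     x₃, starRingEnd ℂ x₄, x₁, starRingEnd ℂ x₂;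
     x₄, -starRingEnd ℂ x₃, x₂, -starRingEnd ℂ x₁]

/-- The four positions `(0,0), (1,0), (0,1), (1,1)` in `{0,1} × {0,1}` for the
`2×2` selector matrices `U₁,...,U₄`. -/
def pqpos : Fin 4 → ℤ × ℤ := ![(0, 0), (1, 0), (0, 1), (1, 1)]

/-! The Fourier transform of `B_n ⊗ U_n` at `(ω, υ)` is `y_n = e^{-i(p_n ω + q_n υ)} F_n`, where
`F_n` is the Fourier transform of `B_n` at `(2ω, 2υ)`; hence `G_t = √(4/M) Σ_n (X_Q)_{n,t} y_n`.
The TBH code is quasi-orthogonal: `X_Q X_Qᴴ = s I + α J` with `s = Σ_i |x_i|² = 1` and `J` the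
permutation matrix of `1 ↔ 3, 2 ↔ 4`, so `Σ_t |G_t|² = (4/M) (s Σ_n |y_n|² + 2 α Re (y_1 ȳ_3 + y_2 ȳ_4))`.
By the Wiener–Khinchin identity `F_B F̄_D = Σ_{m,n} R_{B,D}(m,n) e^{i(mω + nυ)}`, each complementary
pair has `|F|² + |F'|² = R_B(0,0) + R_{B'}(0,0) = M/2`, and mutual orthogonality gives
`F_1 F̄_3 + F_2 F̄_4 = 0`. Since `y_1 ȳ_3` and `y_2 ȳ_4` carry the same phase `e^{iυ}`, the `α`-term
vanishes and the sum is `(4/M) · M = 4`. -/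

open Finset ComplexConjugate

def IsSupportedIn {M : Type*} [Zero M] (L₁ L₂ : ℕ) (F : ℤ → ℤ → M) : Prop :=
  ∀ x y : ℤ, (x < 0 ∨ (L₁ : ℤ) ≤ x ∨ y < 0 ∨ (L₂ : ℤ) ≤ y) → F x y = 0

section Shift

variable {M : Type*} [AddCommMonoid M]

theorem sum_range_eq_sum_Ico_add {L p : ℕ} (hp : p < L) (g : ℤ → M)
    (hg : ∀ x, (x < 0 ∨ (L : ℤ) ≤ x) → g x = 0) :
    ∑ i ∈ range L, g i = ∑ m ∈ Ico (-(L : ℤ)) L, g (p + m) := by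
  refine sum_of_injOn (fun i => (i : ℤ) - p) ?_ ?_ ?_ ?_
  · intro i _ j _ hij
    simp only at hij
    omega
  · intro i hi
    simp only [coe_range, Set.mem_Iio, coe_Ico, Set.mem_Ico] at hi ⊢
    omega
  · intro m _ hm
    refine hg _ (by_contra fun hin => hm ⟨(p + m).toNat, ?_, ?_⟩)
    · simp only [coe_range, Set.mem_Iio]
      omega
    · simp only
      omega
  · intro i _
    simp

theorem sum_range_sum_range_eq_sum_Ico_add {L₁ L₂ p q : ℕ} (hp : p < L₁) (hq : q < L₂)
    (F : ℤ → ℤ → M) (hF : IsSupportedIn L₁ L₂ F) :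
    ∑ i ∈ range L₁, ∑ j ∈ range L₂, F i j =
      ∑ m ∈ Ico (-(L₁ : ℤ)) L₁, ∑ n ∈ Ico (-(L₂ : ℤ)) L₂, F (p + m) (q + n) := by
  rw [sum_range_eq_sum_Ico_add hp (fun x => ∑ j ∈ range L₂, F x j)
    fun x hx => sum_eq_zero fun j _ => hF x j (by omega)]
  exact sum_congr rfl fun m _ => sum_range_eq_sum_Ico_add hq _ fun y hy => hF _ y (by omega)

end Shift

section WienerKhinchin

variable {L₁ L₂ : ℕ}

theorem exp_mul_conj_ft2 {p q : ℕ} (hp : p < L₁) (hq : q < L₂) {D : ℤ → ℤ → ℂ}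
    (hD : IsSupportedIn L₁ L₂ D) (ω υ : ℝ) :
    Complex.exp (-Complex.I * (p * ω + q * υ)) * conj (ft2 L₁ L₂ D ω υ) =
      ∑ m ∈ Ico (-(L₁ : ℤ)) L₁, ∑ n ∈ Ico (-(L₂ : ℤ)) L₂,
        conj (D (p + m) (q + n)) * Complex.exp (Complex.I * (m * ω + n * υ)) := by
  calc Complex.exp (-Complex.I * (p * ω + q * υ)) * conj (ft2 L₁ L₂ D ω υ)
      = ∑ i ∈ range L₁, ∑ j ∈ range L₂, conj (D i j) *
          Complex.exp (Complex.I * (((i - p : ℤ) : ℂ) * ω + ((j - q : ℤ) : ℂ) * υ)) := by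
        simp only [ft2, map_sum, mul_sum, map_mul, ← Complex.exp_conj, map_neg, map_add,
          Complex.conj_I, Complex.conj_ofReal, map_natCast]
        refine sum_congr rfl fun i _ => sum_congr rfl fun j _ => ?_
        rw [mul_left_comm, ← Complex.exp_add]
        push_cast
        ring_nf
    _ = _ := sum_range_sum_range_eq_sum_Ico_add hp hq
          (fun x y => conj (D x y) *
            Complex.exp (Complex.I * (((x - p : ℤ) : ℂ) * ω + ((y - q : ℤ) : ℂ) * υ)))
          fun x y hxy => by simp [hD x y hxy]
    _ = _ := by simp only [add_sub_cancel_left]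

theorem ft2_mul_conj_ft2 (B : ℤ → ℤ → ℂ) {D : ℤ → ℤ → ℂ} (hD : IsSupportedIn L₁ L₂ D)
    (ω υ : ℝ) :
    ft2 L₁ L₂ B ω υ * conj (ft2 L₁ L₂ D ω υ) =
      ∑ m ∈ Ico (-(L₁ : ℤ)) L₁, ∑ n ∈ Ico (-(L₂ : ℤ)) L₂,
        acf2 L₁ L₂ B D m n * Complex.exp (Complex.I * (m * ω + n * υ)) := by
  calc ft2 L₁ L₂ B ω υ * conj (ft2 L₁ L₂ D ω υ)
      = ∑ p ∈ range L₁, ∑ q ∈ range L₂, B p q * ∑ m ∈ Ico (-(L₁ : ℤ)) L₁,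
          ∑ n ∈ Ico (-(L₂ : ℤ)) L₂,
            conj (D (p + m) (q + n)) * Complex.exp (Complex.I * (m * ω + n * υ)) := by
        rw [ft2, sum_mul]
        refine sum_congr rfl fun p hp => ?_
        rw [sum_mul]
        refine sum_congr rfl fun q hq => ?_
        rw [mul_assoc, exp_mul_conj_ft2 (mem_range.1 hp) (mem_range.1 hq) hD]
    _ = _ := by
        simp only [acf2, mul_sum, sum_mul, mul_assoc]
        exact ((sum_congr rfl fun _ _ => sum_comm).trans sum_comm).trans
          (sum_congr rfl fun _ _ => (sum_congr rfl fun _ _ => sum_comm).trans sum_comm)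

theorem ft2_mul_conj_add_ft2_mul_conj (B₀ B₁ : ℤ → ℤ → ℂ) {D₀ D₁ : ℤ → ℤ → ℂ}
    (hD₀ : IsSupportedIn L₁ L₂ D₀) (hD₁ : IsSupportedIn L₁ L₂ D₁) (ω υ : ℝ) :
    ft2 L₁ L₂ B₀ ω υ * conj (ft2 L₁ L₂ D₀ ω υ) + ft2 L₁ L₂ B₁ ω υ * conj (ft2 L₁ L₂ D₁ ω υ) =
      ∑ m ∈ Ico (-(L₁ : ℤ)) L₁, ∑ n ∈ Ico (-(L₂ : ℤ)) L₂,
        (acf2 L₁ L₂ B₀ D₀ m n + acf2 L₁ L₂ B₁ D₁ m n) *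
          Complex.exp (Complex.I * (m * ω + n * υ)) := by
  simp only [ft2_mul_conj_ft2 _ hD₀, ft2_mul_conj_ft2 _ hD₁, ← sum_add_distrib, add_mul]

theorem acf2_self_zero_zero {B : ℤ → ℤ → ℂ}
    (hB : ∀ p q : ℕ, p < L₁ → q < L₂ → ‖B p q‖ = 1) : acf2 L₁ L₂ B B 0 0 = L₁ * L₂ := by
  have h : ∀ p ∈ range L₁, ∀ q ∈ range L₂, B p q * conj (B p q) = 1 := fun p hp q hq => by
    rw [Complex.mul_conj', hB p q (mem_range.1 hp) (mem_range.1 hq)]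
    norm_num
  simp only [acf2, add_zero]
  rw [sum_congr rfl fun p hp => sum_congr rfl (h p hp)]
  simp

theorem norm_sq_ft2_add_norm_sq_ft2 {B D : ℤ → ℤ → ℂ}
    (hB : IsSupportedIn L₁ L₂ B) (hD : IsSupportedIn L₁ L₂ D)
    (hB₁ : ∀ p q : ℕ, p < L₁ → q < L₂ → ‖B p q‖ = 1)
    (hD₁ : ∀ p q : ℕ, p < L₁ → q < L₂ → ‖D p q‖ = 1)
    (hBD : ∀ m n : ℤ, (m, n) ≠ (0, 0) → acf2 L₁ L₂ B B m n + acf2 L₁ L₂ D D m n = 0)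
    (ω υ : ℝ) :
    ‖ft2 L₁ L₂ B ω υ‖ ^ 2 + ‖ft2 L₁ L₂ D ω υ‖ ^ 2 = 2 * L₁ * L₂ := by
  apply Complex.ofReal_injective
  push_cast
  rw [← Complex.mul_conj', ← Complex.mul_conj', ft2_mul_conj_add_ft2_mul_conj B D hB hD]
  rw [sum_eq_single (0 : ℤ) (fun m _ hm => sum_eq_zero fun n _ => by simp [hBD m n (by simp [hm])])
    fun h0 => by simp [acf2, show L₁ = 0 by simp at h0; omega]]
  rw [sum_eq_single (0 : ℤ) (fun n _ hn => by simp [hBD 0 n (by simp [hn])])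
    fun h0 => by simp [acf2, show L₂ = 0 by simp at h0; omega]]
  simp only [acf2_self_zero_zero hB₁, acf2_self_zero_zero hD₁, Int.cast_zero, zero_mul, add_zero,
    mul_zero, Complex.exp_zero, mul_one]
  ring

end WienerKhinchin

theorem sum_range_two_mul_ite_eq_sum_range {M : Type*} [AddCommMonoid M] (L : ℕ) {p₀ : ℤ}
    (h₀ : 0 ≤ p₀) (h₁ : p₀ ≤ 1) (h : ℕ → M) :
    ∑ p ∈ range (2 * L), (if ((p : ℤ) - p₀) % 2 = 0 ∧ 0 ≤ ((p : ℤ) - p₀) / 2 ∧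
        ((p : ℤ) - p₀) / 2 < L then h p else 0) = ∑ a ∈ range L, h (2 * a + p₀.toNat) := by
  symm
  refine sum_of_injOn (fun a => 2 * a + p₀.toNat) ?_ ?_ ?_ ?_
  · intro a _ b _ hab
    simp only at hab
    omega
  · intro a ha
    simp only [coe_range, Set.mem_Iio] at ha ⊢
    omega
  · intro p _ hpe
    rw [if_neg]
    rintro ⟨h2, hlo, hhi⟩
    refine hpe ⟨(((p : ℤ) - p₀) / 2).toNat, ?_, ?_⟩
    · simp only [coe_range, Set.mem_Iio]
      omega
    · simp only
      omega
  · intro a ha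
    rw [mem_range] at ha
    rw [if_pos (by omega)]

theorem ft2_kron2 (L₁ L₂ : ℕ) (B : ℤ → ℤ → ℂ) {p₀ q₀ : ℤ} (hp₀ : 0 ≤ p₀) (hp₁ : p₀ ≤ 1)
    (hq₀ : 0 ≤ q₀) (hq₁ : q₀ ≤ 1) (ω υ : ℝ) :
    ft2 (2 * L₁) (2 * L₂) (kron2 L₁ L₂ B p₀ q₀) ω υ =
      Complex.exp (-Complex.I * (p₀ * ω + q₀ * υ)) * ft2 L₁ L₂ B (2 * ω) (2 * υ) := by
  have hk : ∀ p q : ℤ, kron2 L₁ L₂ B p₀ q₀ p q =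
      if (p - p₀) % 2 = 0 ∧ 0 ≤ (p - p₀) / 2 ∧ (p - p₀) / 2 < (L₁ : ℤ) then
        if (q - q₀) % 2 = 0 ∧ 0 ≤ (q - q₀) / 2 ∧ (q - q₀) / 2 < (L₂ : ℤ) then
          B ((p - p₀) / 2) ((q - q₀) / 2) else 0
      else 0 := by
    intro p q
    rw [← ite_and]
    simp only [kron2, and_assoc]
  have hcast : ∀ {r : ℤ}, 0 ≤ r → ((r.toNat : ℕ) : ℂ) = r := fun hr => by
    rw [← Int.cast_natCast, Int.toNat_of_nonneg hr]
  simp only [ft2, hk, ite_mul, zero_mul, sum_ite_irrel, sum_const_zero]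
  rw [sum_range_two_mul_ite_eq_sum_range L₁ hp₀ hp₁, mul_sum]
  refine sum_congr rfl fun a _ => ?_
  rw [sum_range_two_mul_ite_eq_sum_range L₂ hq₀ hq₁, mul_sum]
  refine sum_congr rfl fun b _ => ?_
  push_cast [hcast hp₀, hcast hq₀, Int.toNat_of_nonneg hp₀, Int.toNat_of_nonneg hq₀,
    add_sub_cancel_right, Int.mul_ediv_cancel_left _ two_ne_zero]
  rw [mul_left_comm, ← Complex.exp_add]
  ring_nf

theorem norm_exp_neg_I_mul_int (a b : ℤ) (ω υ : ℝ) :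
    ‖Complex.exp (-Complex.I * (a * ω + b * υ))‖ = 1 := by
  simp [Complex.norm_exp]

theorem ft2_const_mul_sum {ι : Type*} (s : Finset ι) (L₁ L₂ : ℕ) (c : ℂ) (a : ι → ℂ)
    (f : ι → ℤ → ℤ → ℂ) (ω υ : ℝ) :
    ft2 L₁ L₂ (fun p q => c * ∑ n ∈ s, a n * f n p q) ω υ =
      c * ∑ n ∈ s, a n * ft2 L₁ L₂ (f n) ω υ := by
  simp only [ft2, mul_sum, sum_mul, mul_assoc]
  exact (sum_congr rfl fun _ _ => sum_comm).trans sum_comm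

noncomputable def kronSpectrum (L₁ L₂ : ℕ) (B : Fin 4 → ℤ → ℤ → ℂ) (ω υ : ℝ) : Fin 4 → ℂ :=
  fun n => ft2 (2 * L₁) (2 * L₂) (kron2 L₁ L₂ (B n) (pqpos n).1 (pqpos n).2) ω υ

section KronSpectrum

variable {L₁ L₂ : ℕ} {B : Fin 4 → ℤ → ℤ → ℂ} {ω υ : ℝ}

theorem kronSpectrum_apply (n : Fin 4) :
    kronSpectrum L₁ L₂ B ω υ n =
      Complex.exp (-Complex.I * ((pqpos n).1 * ω + (pqpos n).2 * υ)) *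
        ft2 L₁ L₂ (B n) (2 * ω) (2 * υ) := by
  have hpos : 0 ≤ (pqpos n).1 ∧ (pqpos n).1 ≤ 1 ∧ 0 ≤ (pqpos n).2 ∧ (pqpos n).2 ≤ 1 := by
    revert n
    decide
  exact ft2_kron2 L₁ L₂ (B n) hpos.1 hpos.2.1 hpos.2.2.1 hpos.2.2.2 ω υ

theorem norm_kronSpectrum (n : Fin 4) :
    ‖kronSpectrum L₁ L₂ B ω υ n‖ = ‖ft2 L₁ L₂ (B n) (2 * ω) (2 * υ)‖ := by
  rw [kronSpectrum_apply, norm_mul, norm_exp_neg_I_mul_int, one_mul]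

theorem kronSpectrum_mul_conj_add_eq_zero
    (h : ft2 L₁ L₂ (B 0) (2 * ω) (2 * υ) * conj (ft2 L₁ L₂ (B 2) (2 * ω) (2 * υ)) +
      ft2 L₁ L₂ (B 1) (2 * ω) (2 * υ) * conj (ft2 L₁ L₂ (B 3) (2 * ω) (2 * υ)) = 0) :
    kronSpectrum L₁ L₂ B ω υ 0 * conj (kronSpectrum L₁ L₂ B ω υ 2) +
      kronSpectrum L₁ L₂ B ω υ 1 * conj (kronSpectrum L₁ L₂ B ω υ 3) = 0 := by
  have hphase : Complex.exp (-(Complex.I * ω)) * Complex.exp (Complex.I * (ω + υ)) =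
      Complex.exp (Complex.I * υ) := by
    rw [← Complex.exp_add]
    ring_nf
  simp only [kronSpectrum_apply, pqpos, cons_val_zero, cons_val_one, Matrix.cons_val,
    Int.cast_zero, Int.cast_one, zero_mul, mul_zero, add_zero, zero_add, one_mul, Complex.exp_zero,
    neg_mul, map_mul, ← Complex.exp_conj, map_neg, map_add, Complex.conj_I, Complex.conj_ofReal,
    neg_neg]
  linear_combination Complex.exp (Complex.I * υ) * h +
    ft2 L₁ L₂ (B 1) (2 * ω) (2 * υ) * conj (ft2 L₁ L₂ (B 3) (2 * ω) (2 * υ)) * hphase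

theorem ft2_const_mul_sum_kron2 (c : ℂ) (X : Matrix (Fin 4) (Fin 4) ℂ) (t : Fin 4) :
    ft2 (2 * L₁) (2 * L₂)
        (fun p q => c * ∑ n, X n t * kron2 L₁ L₂ (B n) (pqpos n).1 (pqpos n).2 p q) ω υ =
      c * (kronSpectrum L₁ L₂ B ω υ ᵥ* X) t := by
  rw [ft2_const_mul_sum]
  exact congrArg _ (sum_congr rfl fun n _ => mul_comm _ _)

end KronSpectrum

theorem XQ_mul_conjTranspose (x₁ x₂ x₃ x₄ : ℂ) :
    XQ x₁ x₂ x₃ x₄ * (XQ x₁ x₂ x₃ x₄)ᴴ =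
      let s : ℂ := ((‖x₁‖ ^ 2 + ‖x₂‖ ^ 2 + ‖x₃‖ ^ 2 + ‖x₄‖ ^ 2 : ℝ) : ℂ)
      let α := x₁ * conj x₃ + x₃ * conj x₁ + x₂ * conj x₄ + x₄ * conj x₂
      !![s, 0, α, 0; 0, s, 0, α; α, 0, s, 0; 0, α, 0, s] := by
  ext i j
  fin_cases i <;> fin_cases j <;>
    simp [XQ, Matrix.mul_apply, Fin.sum_univ_four, ← Complex.mul_conj'] <;> ring

theorem sum_norm_sq_vecMul {ι κ : Type*} [Fintype ι] [Fintype κ] (X : Matrix ι κ ℂ)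
    (y : ι → ℂ) :
    ((∑ t, ‖(y ᵥ* X) t‖ ^ 2 : ℝ) : ℂ) = y ᵥ* (X * Xᴴ) ⬝ᵥ star y := by
  rw [← Matrix.vecMul_vecMul, ← Matrix.dotProduct_mulVec, ← Matrix.star_vecMul]
  push_cast
  simp [dotProduct, Complex.mul_conj']

theorem sum_norm_sq_vecMul_XQ (x₁ x₂ x₃ x₄ : ℂ) {y : Fin 4 → ℂ}
    (hy : y 0 * conj (y 2) + y 1 * conj (y 3) = 0) :
    ∑ t, ‖(y ᵥ* XQ x₁ x₂ x₃ x₄) t‖ ^ 2 =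
      (‖x₁‖ ^ 2 + ‖x₂‖ ^ 2 + ‖x₃‖ ^ 2 + ‖x₄‖ ^ 2) * ∑ n, ‖y n‖ ^ 2 := by
  apply Complex.ofReal_injective
  rw [sum_norm_sq_vecMul, XQ_mul_conjTranspose]
  have hy' := congrArg conj hy
  simp only [map_add, map_mul, Complex.conj_conj, map_zero] at hy'
  simp only [dotProduct, vecMul, Complex.ofReal_add, Complex.ofReal_pow, ← Complex.mul_conj',
    of_apply, cons_val', cons_val_fin_one, Fin.sum_univ_four, cons_val_zero, cons_val_one,
    Matrix.cons_val, Pi.star_apply, RCLike.star_def, mul_zero, add_zero, zero_add, Complex.ofReal_mul]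
  linear_combination (x₁ * conj x₃ + x₃ * conj x₁ + x₂ * conj x₄ + x₄ * conj x₂) * (hy + hy')

/-- for 2D binary OCCs `{B₁,B₂}`, `{B₃,B₄}` of size
`(N_e/2) × (N_a/2)` (here `L₁ = N_e/2`, `L₂ = N_a/2`, `M = N_a N_e = 4L₁L₂`) and
symbols of modulus `1/2`, the angle-domain signals
`G_t(ω,υ)` of `A_t = √(4/M) ∑_n (X_Q)_{n,t} (B_n ⊗ U_n)` satisfy
`∑_{t=1}^4 |G_t(ω,υ)|² = 4` for all `ω, υ`. -/
theorem stmt16 (L₁ L₂ : ℕ) (hL₁ : 0 < L₁) (hL₂ : 0 < L₂)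
    (B : Fin 4 → ℤ → ℤ → ℂ)
    (hsupp : ∀ n, ∀ p q : ℤ, (p < 0 ∨ (L₁ : ℤ) ≤ p ∨ q < 0 ∨ (L₂ : ℤ) ≤ q) → B n p q = 0)
    (hpm : ∀ n, ∀ p q : ℤ, 0 ≤ p → p < (L₁ : ℤ) → 0 ≤ q → q < (L₂ : ℤ) →
      (B n p q = 1 ∨ B n p q = -1))
    (h12 : ∀ m n : ℤ, (m, n) ≠ (0, 0) →
      acf2 L₁ L₂ (B 0) (B 0) m n + acf2 L₁ L₂ (B 1) (B 1) m n = 0)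
    (h34 : ∀ m n : ℤ, (m, n) ≠ (0, 0) →
      acf2 L₁ L₂ (B 2) (B 2) m n + acf2 L₁ L₂ (B 3) (B 3) m n = 0)
    (hcross : ∀ m n : ℤ,
      acf2 L₁ L₂ (B 0) (B 2) m n + acf2 L₁ L₂ (B 1) (B 3) m n = 0)
    (x₁ x₂ x₃ x₄ : ℂ)
    (hx₁ : ‖x₁‖ = 1 / 2) (hx₂ : ‖x₂‖ = 1 / 2) (hx₃ : ‖x₃‖ = 1 / 2) (hx₄ : ‖x₄‖ = 1 / 2)
    (ω υ : ℝ) :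
    ∑ t : Fin 4,
      ‖ft2 (2 * L₁) (2 * L₂)
        (fun p q => (Real.sqrt (4 / (4 * (L₁ : ℝ) * (L₂ : ℝ))) : ℂ) *
          ∑ n : Fin 4, XQ x₁ x₂ x₃ x₄ n t *
            kron2 L₁ L₂ (B n) (pqpos n).1 (pqpos n).2 p q) ω υ‖ ^ 2 = 4 := by
  have hunit : ∀ n, ∀ p q : ℕ, p < L₁ → q < L₂ → ‖B n p q‖ = 1 := fun n p q hp hq => by
    rcases hpm n p q (by positivity) (by omega) (by positivity) (by omega) with h | h <;> simp [h]
  have hnorm : ∑ n, ‖kronSpectrum L₁ L₂ B ω υ n‖ ^ 2 = 4 * L₁ * L₂ := by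
    simp only [Fin.sum_univ_four, norm_kronSpectrum]
    linear_combination
      norm_sq_ft2_add_norm_sq_ft2 (hsupp 0) (hsupp 1) (hunit 0) (hunit 1) h12 (2 * ω) (2 * υ) +
      norm_sq_ft2_add_norm_sq_ft2 (hsupp 2) (hsupp 3) (hunit 2) (hunit 3) h34 (2 * ω) (2 * υ)
  have horth := kronSpectrum_mul_conj_add_eq_zero (ω := ω) (υ := υ) (by
    rw [ft2_mul_conj_add_ft2_mul_conj _ _ (hsupp 2) (hsupp 3)]
    simp [hcross])
  simp only [ft2_const_mul_sum_kron2, norm_mul, mul_pow, ← mul_sum,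
    sum_norm_sq_vecMul_XQ _ _ _ _ horth, hnorm, hx₁, hx₂, hx₃, hx₄, Complex.norm_real,
    Real.norm_eq_abs, sq_abs]
  rw [Real.sq_sqrt (by positivity)]
  field_simp
  norm_num
end

section
/- Let c_1, c_2, c_3, c_4 be complex sequences of length L such that {c_1, c_2} and {c_3, c_4} are complementary pairs, i.e., R_{c_1}(τ) + R_{c_2}(τ) = 0 and R_{c_3}(τ) + R_{c_4}(τ) = 0 for all τ ≠ 0, and mutually orthogonal complementary, i.e., R_{c_1,c_3}(τ) + R_{c_2,c_4}(τ) = 0 for all τ. For n ∈ {1,2,3,4}, let w_n = c_n ⊗ u_n be the length-4L sequence with (c_n ⊗ u_n)(4l + (n−1)) = c_n(l) and zero elsewhere. Then {w_1, w_2} and {w_3, w_4} are complementary pairs and mutually orthogonal complementary: R_{w_1}(τ) + R_{w_2}(τ) = 0 and R_{w_3}(τ) + R_{w_4}(τ) = 0 for all τ ≠ 0, and R_{w_1,w_3}(τ) + R_{w_2,w_4}(τ) = 0 for all τ. -/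
/-! Interleaving with stride 4 rescales correlations: the crosscorrelation of `a ⊗ u_i` with
`b ⊗ u_j` at shift `τ` vanishes unless `τ ≡ j - i (mod 4)`, and at `τ = 4t + (j - i)` it equals
the crosscorrelation of `a` with `b` at `t`. In each of the three sums of the theorem the two
terms have the same offset difference `j - i` (namely `0`, `0` and `2`), so each sum is either
identically zero or the corresponding sum for the `c_n` at a rescaled shift. -/

/-- Aperiodic crosscorrelation of two length-`M` complex sequences (regarded as
functions on `ℤ` vanishing outside `{0,...,M-1}`). -/
noncomputable def acf (M : ℕ) (w v : ℤ → ℂ) (τ : ℤ) : ℂ :=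
  ∑ m ∈ Finset.range M, w m * (starRingEnd ℂ) (v ((m : ℤ) + τ))

/-- Kronecker product `c ⊗ u_n` of a length-`L` sequence `c` with the `n`-th
standard basis vector of `ℂ⁴` (0-indexed): the length-`4L` sequence whose entry
at position `4l + n` is `c(l)` for `0 ≤ l ≤ L-1`, and which is zero elsewhere. -/
noncomputable def kron (L : ℕ) (c : ℤ → ℂ) (n : ℤ) : ℤ → ℂ := fun m =>
  if (m - n) % 4 = 0 ∧ 0 ≤ (m - n) / 4 ∧ (m - n) / 4 < (L : ℤ) then c ((m - n) / 4) else 0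

open Finset

lemma kron_four_mul_add (L : ℕ) (b : ℤ → ℂ) (n x : ℤ) :
    kron L b n (4 * x + n) = if 0 ≤ x ∧ x < L then b x else 0 := by
  simp only [kron, add_sub_cancel_right, Int.mul_emod_right,
    Int.mul_ediv_cancel_left _ four_ne_zero, true_and]

lemma kron_four_mul_add_of_support {L : ℕ} {b : ℤ → ℂ}
    (hb : ∀ l : ℤ, (l < 0 ∨ (L : ℤ) ≤ l) → b l = 0) (n x : ℤ) :
    kron L b n (4 * x + n) = b x := by
  rw [kron_four_mul_add]
  split_ifs with hx
  · rfl
  · exact (hb x (by omega)).symm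

lemma kron_eq_zero_of_not_dvd (L : ℕ) (b : ℤ → ℂ) {n m : ℤ} (h : ¬ (4 : ℤ) ∣ m - n) :
    kron L b n m = 0 :=
  if_neg fun hm => h (Int.dvd_of_emod_eq_zero hm.1)

lemma sum_range_kron_mul {L : ℕ} (a g : ℤ → ℂ) {n : ℤ} (hn0 : 0 ≤ n) (hn4 : n < 4) :
    ∑ m ∈ range (4 * L), kron L a n m * g m = ∑ l ∈ range L, a l * g (4 * l + n) := by
  have hcast (l : ℕ) : ((4 * l + n.toNat : ℕ) : ℤ) = 4 * l + n := by push_cast; omega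
  symm
  refine sum_of_injOn (fun l => 4 * l + n.toNat) (fun x _ y _ h => by dsimp only at h; omega)
    (fun l hl => by simp only [coe_range, Set.mem_Iio] at hl ⊢; omega)
    (fun m _ hnot => ?_) (fun l hl => ?_)
  · rw [kron, if_neg, zero_mul]
    rintro ⟨hdvd, hpos, hlt⟩
    exact hnot ⟨((m - n) / 4).toNat, by simp only [coe_range, Set.mem_Iio]; omega,
      by dsimp only; omega⟩
  · simp only [mem_range] at hl
    simp only [hcast, kron_four_mul_add, Nat.cast_nonneg, Nat.cast_lt, hl, and_self, if_true]

lemma acf_kron_kron_four_mul_add_sub {L : ℕ} (a : ℤ → ℂ) {b : ℤ → ℂ}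
    (hb : ∀ l : ℤ, (l < 0 ∨ (L : ℤ) ≤ l) → b l = 0) {na : ℤ} (hna0 : 0 ≤ na) (hna4 : na < 4)
    (nb t : ℤ) :
    acf (4 * L) (kron L a na) (kron L b nb) (4 * t + nb - na) = acf L a b t := by
  rw [acf, sum_range_kron_mul _ (fun m => (starRingEnd ℂ) (kron L b nb (m + (4 * t + nb - na))))
    hna0 hna4, acf]
  refine sum_congr rfl fun l _ => ?_
  rw [show 4 * (l : ℤ) + na + (4 * t + nb - na) = 4 * (l + t) + nb by ring,
    kron_four_mul_add_of_support hb]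

lemma acf_kron_kron_of_not_dvd (L : ℕ) (a b : ℤ → ℂ) {na : ℤ} (hna0 : 0 ≤ na) (hna4 : na < 4)
    {nb τ : ℤ} (h : ¬ (4 : ℤ) ∣ τ + na - nb) :
    acf (4 * L) (kron L a na) (kron L b nb) τ = 0 := by
  rw [acf, sum_range_kron_mul _ (fun m => (starRingEnd ℂ) (kron L b nb (m + τ))) hna0 hna4]
  refine sum_eq_zero fun l _ => ?_
  rw [kron_eq_zero_of_not_dvd L b (by omega), map_zero, mul_zero]

lemma acf_kron_add_acf_kron_eq_zero {L : ℕ} {a b a' b' : ℤ → ℂ} {na nb na' nb' : ℤ}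
    (hna0 : 0 ≤ na) (hna4 : na < 4) (hna0' : 0 ≤ na') (hna4' : na' < 4)
    (hb : ∀ l : ℤ, (l < 0 ∨ (L : ℤ) ≤ l) → b l = 0)
    (hb' : ∀ l : ℤ, (l < 0 ∨ (L : ℤ) ≤ l) → b' l = 0)
    (hoff : nb - na = nb' - na') {τ : ℤ}
    (h : ∀ t, 4 * t + nb - na = τ → acf L a b t + acf L a' b' t = 0) :
    acf (4 * L) (kron L a na) (kron L b nb) τ
      + acf (4 * L) (kron L a' na') (kron L b' nb') τ = 0 := by
  by_cases hτ : (4 : ℤ) ∣ τ + na - nb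
  · obtain ⟨t, rfl⟩ : ∃ t, τ = 4 * t + nb - na := ⟨(τ + na - nb) / 4, by omega⟩
    rw [acf_kron_kron_four_mul_add_sub a hb hna0 hna4, show 4 * t + nb - na = 4 * t + nb' - na'
      by omega, acf_kron_kron_four_mul_add_sub a' hb' hna0' hna4']
    exact h t rfl
  · rw [acf_kron_kron_of_not_dvd L a b hna0 hna4 hτ,
      acf_kron_kron_of_not_dvd L a' b' hna0' hna4' (by omega), add_zero]

/-- if `{c₁,c₂}` and `{c₃,c₄}` are complementary pairs that are
mutually orthogonal complementary, then so are the length-`4L` sequences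
`w_n = c_n ⊗ u_n` (with `w_n` placed at positions `4l + (n-1)`, 0-indexed). -/
theorem stmt17 (L : ℕ) (c : Fin 4 → ℤ → ℂ)
    (hsupp : ∀ n, ∀ l : ℤ, (l < 0 ∨ (L : ℤ) ≤ l) → c n l = 0)
    (h12 : ∀ τ : ℤ, τ ≠ 0 → acf L (c 0) (c 0) τ + acf L (c 1) (c 1) τ = 0)
    (h34 : ∀ τ : ℤ, τ ≠ 0 → acf L (c 2) (c 2) τ + acf L (c 3) (c 3) τ = 0)
    (hcross : ∀ τ : ℤ, acf L (c 0) (c 2) τ + acf L (c 1) (c 3) τ = 0) :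
    (∀ τ : ℤ, τ ≠ 0 →
        acf (4 * L) (kron L (c 0) 0) (kron L (c 0) 0) τ
          + acf (4 * L) (kron L (c 1) 1) (kron L (c 1) 1) τ = 0) ∧
      (∀ τ : ℤ, τ ≠ 0 →
        acf (4 * L) (kron L (c 2) 2) (kron L (c 2) 2) τ
          + acf (4 * L) (kron L (c 3) 3) (kron L (c 3) 3) τ = 0) ∧
      (∀ τ : ℤ,
        acf (4 * L) (kron L (c 0) 0) (kron L (c 2) 2) τ
          + acf (4 * L) (kron L (c 1) 1) (kron L (c 3) 3) τ = 0) := by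
  refine ⟨fun τ hτ => ?_, fun τ hτ => ?_, fun τ => ?_⟩
  · exact acf_kron_add_acf_kron_eq_zero (by norm_num) (by norm_num) (by norm_num) (by norm_num)
      (hsupp 0) (hsupp 1) (by norm_num) fun t ht => h12 t (by omega)
  · exact acf_kron_add_acf_kron_eq_zero (by norm_num) (by norm_num) (by norm_num) (by norm_num)
      (hsupp 2) (hsupp 3) (by norm_num) fun t ht => h34 t (by omega)
  · exact acf_kron_add_acf_kron_eq_zero (by norm_num) (by norm_num) (by norm_num) (by norm_num)
      (hsupp 2) (hsupp 3) (by norm_num) fun t _ => hcross t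
end
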